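/- For H = (px²+py²+pz²)/2 + k1/r + k2/x² + k3/y² + k4/z² (r = √(x²+y²+z²)), the function R_x = (J2·pz − J3·py) − x·(k1/r + 2k2/x² + 2k3/y² + 2k4/z²), where J2 = z·px − x·pz and J3 = x·py − y·px, satisfies {R_x, H} = (2k2/x³)·(x·px + y·py + z·pz), and the function D_x = (x·px + y·py + z·pz)/x satisfies {D_x, H} = −(1/x²)·R_x. -/

import Mathlib

/-!
Both identities are computations with the gradients of `Ham`, `Rx` and `D_x`. Write
`H = |p|²/2 + V` with `V = k1/r + k2/x² + k3/y² + k4/z²`; then `R_x` is a quadratic polynomial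
in the momenta minus `x · V'`, where `V'` is `V` with `k2, k3, k4` doubled. The derivative of
`1/r` is written as `-qᵢ / ((x²+y²+z²) r)` instead of `-qᵢ / r³`: with this normalisation
both brackets become identities of rational functions in the coordinates and `r`, closed by
clearing denominators.
-/

noncomputable section

/-- Phase space ℝ⁶ with coordinates (x,y,z,px,py,pz). -/
abbrev Pt := Fin 6 → ℝ

/-- Standard basis vector. -/
def e (j : Fin 6) : Pt := Pi.single j 1

/-- Canonical Poisson bracket on ℝ⁶:
{F,G} = Σᵢ (∂F/∂qᵢ ∂G/∂pᵢ − ∂F/∂pᵢ ∂G/∂qᵢ). -/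
def pb (F G : Pt → ℝ) (q : Pt) : ℝ :=
    (fderiv ℝ F q (e 0)) * (fderiv ℝ G q (e 3)) - (fderiv ℝ F q (e 3)) * (fderiv ℝ G q (e 0))
  + (fderiv ℝ F q (e 1)) * (fderiv ℝ G q (e 4)) - (fderiv ℝ F q (e 4)) * (fderiv ℝ G q (e 1))
  + (fderiv ℝ F q (e 2)) * (fderiv ℝ G q (e 5)) - (fderiv ℝ F q (e 5)) * (fderiv ℝ G q (e 2))

/-- H = (px²+py²+pz²)/2 + k1/r + k2/x² + k3/y² + k4/z², r = √(x²+y²+z²). -/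
def Ham (k1 k2 k3 k4 : ℝ) (q : Pt) : ℝ :=
  (q 3 ^ 2 + q 4 ^ 2 + q 5 ^ 2) / 2 + k1 / Real.sqrt (q 0 ^ 2 + q 1 ^ 2 + q 2 ^ 2)
    + k2 / q 0 ^ 2 + k3 / q 1 ^ 2 + k4 / q 2 ^ 2

/-- R_x = (J2 pz − J3 py) − x·(k1/r + 2k2/x² + 2k3/y² + 2k4/z²),
with J2 = z px − x pz, J3 = x py − y px. -/
def Rx (k1 k2 k3 k4 : ℝ) (q : Pt) : ℝ :=
  ((q 2 * q 3 - q 0 * q 5) * q 5 - (q 0 * q 4 - q 1 * q 3) * q 4)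
    - q 0 * (k1 / Real.sqrt (q 0 ^ 2 + q 1 ^ 2 + q 2 ^ 2)
        + 2 * k2 / q 0 ^ 2 + 2 * k3 / q 1 ^ 2 + 2 * k4 / q 2 ^ 2)

open ContinuousLinearMap

section Coordinates

variable {ι : Type*} [Fintype ι] {q : ι → ℝ}

theorem hasFDerivAt_apply_sq (i : ι) :
    HasFDerivAt (fun p : ι → ℝ => p i ^ 2) ((2 * q i) • (proj i : (ι → ℝ) →L[ℝ] ℝ)) q := by
  simpa using (hasFDerivAt_apply (𝕜 := ℝ) i q).pow 2

theorem hasFDerivAt_const_div_apply_sq (c : ℝ) {i : ι} (hi : q i ≠ 0) :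
    HasFDerivAt (fun p : ι → ℝ => c / p i ^ 2)
      ((-2 * c / q i ^ 3) • (proj i : (ι → ℝ) →L[ℝ] ℝ)) q := by
  have h : HasDerivAt (fun t : ℝ => c / t ^ 2) (-2 * c / q i ^ 3) (q i) := by
    refine ((hasDerivAt_const (q i) c).div (hasDerivAt_pow 2 (q i))
      (pow_ne_zero 2 hi)).congr_deriv ?_
    field_simp
    ring
  exact h.comp_hasFDerivAt (f := fun p : ι → ℝ => p i) q (hasFDerivAt_apply i q)

theorem hasFDerivAt_const_div_sqrt_sum_sq (c : ℝ) (i j k : ι)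
    (hq : q i ^ 2 + q j ^ 2 + q k ^ 2 ≠ 0) :
    HasFDerivAt (fun p : ι → ℝ => c / √(p i ^ 2 + p j ^ 2 + p k ^ 2))
      ((-c / ((q i ^ 2 + q j ^ 2 + q k ^ 2) * √(q i ^ 2 + q j ^ 2 + q k ^ 2))) •
        (q i • (proj i : (ι → ℝ) →L[ℝ] ℝ) + q j • proj j + q k • proj k)) q := by
  set s := q i ^ 2 + q j ^ 2 + q k ^ 2
  have hs : 0 < s := (by positivity : 0 ≤ s).lt_of_ne' hq
  have h : HasDerivAt (fun t : ℝ => c / √t) (-c / (2 * (s * √s))) s := by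
    refine ((hasDerivAt_const s c).div (Real.hasDerivAt_sqrt hq)
      (Real.sqrt_pos.mpr hs).ne').congr_deriv ?_
    rw [Real.sq_sqrt hs.le]
    field_simp
    ring
  refine (h.comp_hasFDerivAt (f := fun p : ι → ℝ => p i ^ 2 + p j ^ 2 + p k ^ 2) q
    (((hasFDerivAt_apply_sq i).add (hasFDerivAt_apply_sq j)).add
      (hasFDerivAt_apply_sq k))).congr_fderiv (ContinuousLinearMap.ext fun v => ?_)
  simp only [smul_apply, add_apply, proj_apply, smul_eq_mul]
  field_simp

end Coordinates

def potential (k1 a b c : ℝ) (q : Pt) : ℝ :=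
  k1 / √(q 0 ^ 2 + q 1 ^ 2 + q 2 ^ 2) + a / q 0 ^ 2 + b / q 1 ^ 2 + c / q 2 ^ 2

theorem Ham_eq_add_potential (k1 k2 k3 k4 : ℝ) (q : Pt) :
    Ham k1 k2 k3 k4 q = (q 3 ^ 2 + q 4 ^ 2 + q 5 ^ 2) / 2 + potential k1 k2 k3 k4 q := by
  simp only [Ham, potential]
  ring

theorem Rx_eq_sub_mul_potential (k1 k2 k3 k4 : ℝ) (q : Pt) :
    Rx k1 k2 k3 k4 q = ((q 2 * q 3 - q 0 * q 5) * q 5 - (q 0 * q 4 - q 1 * q 3) * q 4)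
      - q 0 * potential k1 (2 * k2) (2 * k3) (2 * k4) q := by
  simp only [Rx, potential, mul_div_assoc]

theorem hasFDerivAt_potential {q : Pt} (hx : q 0 ≠ 0) (hy : q 1 ≠ 0) (hz : q 2 ≠ 0)
    (k1 a b c : ℝ) :
    HasFDerivAt (potential k1 a b c)
      ((-k1 / ((q 0 ^ 2 + q 1 ^ 2 + q 2 ^ 2) * √(q 0 ^ 2 + q 1 ^ 2 + q 2 ^ 2))) •
          (q 0 • (proj 0 : Pt →L[ℝ] ℝ) + q 1 • proj 1 + q 2 • proj 2)
        + (-2 * a / q 0 ^ 3) • proj 0 + (-2 * b / q 1 ^ 3) • proj 1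
        + (-2 * c / q 2 ^ 3) • proj 2) q :=
  (((hasFDerivAt_const_div_sqrt_sum_sq k1 0 1 2 (by positivity)).add
    (hasFDerivAt_const_div_apply_sq a hx)).add (hasFDerivAt_const_div_apply_sq b hy)).add
    (hasFDerivAt_const_div_apply_sq c hz)

theorem fderiv_potential_apply {q : Pt} (hx : q 0 ≠ 0) (hy : q 1 ≠ 0) (hz : q 2 ≠ 0)
    (k1 a b c : ℝ) (v : Pt) :
    fderiv ℝ (potential k1 a b c) q v =
      -k1 * (q 0 * v 0 + q 1 * v 1 + q 2 * v 2)
          / ((q 0 ^ 2 + q 1 ^ 2 + q 2 ^ 2) * √(q 0 ^ 2 + q 1 ^ 2 + q 2 ^ 2))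
        - 2 * a * v 0 / q 0 ^ 3 - 2 * b * v 1 / q 1 ^ 3 - 2 * c * v 2 / q 2 ^ 3 := by
  rw [(hasFDerivAt_potential hx hy hz k1 a b c).fderiv]
  simp only [add_apply, smul_apply, proj_apply, smul_eq_mul]
  ring

theorem fderiv_Ham_apply {q : Pt} (hx : q 0 ≠ 0) (hy : q 1 ≠ 0) (hz : q 2 ≠ 0)
    (k1 k2 k3 k4 : ℝ) (v : Pt) :
    fderiv ℝ (Ham k1 k2 k3 k4) q v =
      q 3 * v 3 + q 4 * v 4 + q 5 * v 5 + fderiv ℝ (potential k1 k2 k3 k4) q v := by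
  have hT := HasFDerivAt.mul_const (((hasFDerivAt_apply_sq (q := q) 3).add
    (hasFDerivAt_apply_sq 4)).add (hasFDerivAt_apply_sq 5)) (2⁻¹ : ℝ)
  have h := (hT.add (hasFDerivAt_potential hx hy hz k1 k2 k3 k4).differentiableAt.hasFDerivAt
    ).congr_of_eventuallyEq (f₁ := Ham k1 k2 k3 k4) (.of_forall fun p => by
      simp only [Ham_eq_add_potential, Pi.add_apply]
      ring)
  rw [h.fderiv]
  simp only [add_apply, smul_apply, proj_apply, smul_eq_mul]
  ring

theorem fderiv_Rx_apply {q : Pt} (hx : q 0 ≠ 0) (hy : q 1 ≠ 0) (hz : q 2 ≠ 0)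
    (k1 k2 k3 k4 : ℝ) (v : Pt) :
    fderiv ℝ (Rx k1 k2 k3 k4) q v =
      (v 2 * q 3 + q 2 * v 3 - (v 0 * q 5 + q 0 * v 5)) * q 5 + (q 2 * q 3 - q 0 * q 5) * v 5
        - ((v 0 * q 4 + q 0 * v 4 - (v 1 * q 3 + q 1 * v 3)) * q 4
          + (q 0 * q 4 - q 1 * q 3) * v 4)
        - (v 0 * potential k1 (2 * k2) (2 * k3) (2 * k4) q
          + q 0 * fderiv ℝ (potential k1 (2 * k2) (2 * k3) (2 * k4)) q v) := by
  have hc (i : Fin 6) := hasFDerivAt_apply (𝕜 := ℝ) i q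
  have hV := (hasFDerivAt_potential hx hy hz k1 (2 * k2) (2 * k3) (2 * k4)).differentiableAt
  have h := (((((hc 2).mul (hc 3)).sub ((hc 0).mul (hc 5))).mul (hc 5)).sub
    ((((hc 0).mul (hc 4)).sub ((hc 1).mul (hc 3))).mul (hc 4))).sub
    ((hc 0).mul hV.hasFDerivAt) |>.congr_of_eventuallyEq (f₁ := Rx k1 k2 k3 k4)
      (.of_forall fun p => Rx_eq_sub_mul_potential k1 k2 k3 k4 p)
  rw [h.fderiv]
  simp only [add_apply, sub_apply, smul_apply, proj_apply, smul_eq_mul, Pi.mul_apply,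
    Pi.sub_apply]
  ring

theorem fderiv_Dx_apply {q : Pt} (hx : q 0 ≠ 0) (v : Pt) :
    fderiv ℝ (fun p : Pt => (p 0 * p 3 + p 1 * p 4 + p 2 * p 5) / p 0) q v =
      (v 0 * q 3 + q 0 * v 3 + v 1 * q 4 + q 1 * v 4 + v 2 * q 5 + q 2 * v 5) / q 0
        - (q 0 * q 3 + q 1 * q 4 + q 2 * q 5) * v 0 / q 0 ^ 2 := by
  have hc (i : Fin 6) := hasFDerivAt_apply (𝕜 := ℝ) i q
  have h := ((((hc 0).mul (hc 3)).add ((hc 1).mul (hc 4))).add ((hc 2).mul (hc 5))).mul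
    ((hasDerivAt_inv hx).comp_hasFDerivAt q (hc 0)) |>.congr_of_eventuallyEq
      (f₁ := fun p : Pt => (p 0 * p 3 + p 1 * p 4 + p 2 * p 5) / p 0)
      (.of_forall fun p => div_eq_mul_inv _ _)
  rw [h.fderiv]
  simp only [add_apply, smul_apply, proj_apply, smul_eq_mul, Pi.mul_apply, Pi.add_apply,
    Function.comp_apply]
  field_simp
  ring

theorem stmt15 (k1 k2 k3 k4 : ℝ) :
    ∀ q : Pt, q 0 ≠ 0 → q 1 ≠ 0 → q 2 ≠ 0 →
      pb (Rx k1 k2 k3 k4) (Ham k1 k2 k3 k4) q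
          = (2 * k2 / q 0 ^ 3) * (q 0 * q 3 + q 1 * q 4 + q 2 * q 5) ∧
      pb (fun p => (p 0 * p 3 + p 1 * p 4 + p 2 * p 5) / p 0) (Ham k1 k2 k3 k4) q
          = -(1 / q 0 ^ 2) * Rx k1 k2 k3 k4 q := by
  intro q hx hy hz
  have hr : √(q 0 ^ 2 + q 1 ^ 2 + q 2 ^ 2) ≠ 0 := by positivity
  refine ⟨?_, ?_⟩
  · simp only [pb, fderiv_Rx_apply hx hy hz, fderiv_Ham_apply hx hy hz,
      fderiv_potential_apply hx hy hz, e, Pi.single_apply, Fin.reduceEq, ↓reduceIte, potential]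
    field_simp
    ring
  · simp only [pb, fderiv_Dx_apply hx, fderiv_Ham_apply hx hy hz,
      fderiv_potential_apply hx hy hz, e, Pi.single_apply, Fin.reduceEq, ↓reduceIte,
      Rx_eq_sub_mul_potential, potential]
    field_simp
    ring
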